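/- For every integer n ≥ 1 and all nonnegative integers c_1,…,c_l and d_1,…,d_m with k := Σ_{a=1}^l c_a + Σ_{b=1}^m d_b, one has in ℂ[S_n]: (∏_{a=1}^l e_{c_a}(J_1,…,J_n)) · (∏_{b=1}^m h_{d_b}(J_1,…,J_n)) = Σ (a_1 b_1)(a_2 b_2)⋯(a_k b_k), where the sum runs over all multimonotonic sequences of transpositions of type ((c_1,…,c_l),(d_1,…,d_m)). -/

import Mathlib

open scoped Classical

/-- The Jucys–Murphy element `J_b = ∑_{a < b} (a b)` in the complex group algebra of `S_n`. -/
noncomputable def JM (n : ℕ) (b : Fin n) : MonoidAlgebra ℂ (Equiv.Perm (Fin n)) :=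
  ∑ a ∈ Finset.Iio b, MonoidAlgebra.single (Equiv.swap a b) 1

/-- Substitution of the (pairwise commuting) Jucys–Murphy elements `J_1, …, J_n` for the
indeterminates of a multivariate polynomial `G ∈ ℂ[x_1, …, x_n]`. -/
noncomputable def evalJM (n : ℕ) (G : MvPolynomial (Fin n) ℂ) :
    MonoidAlgebra ℂ (Equiv.Perm (Fin n)) :=
  ∑ m ∈ G.support, G.coeff m • ((List.finRange n).map fun i => JM n i ^ m i).prod

/-- A list `L` of pairs `(a_i, b_i)`, encoding the sequence of transpositions
`((a_1 b_1), …, (a_k b_k))`, is *multimonotonic of type `(cs, ds)`* if `a_i < b_i` for each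
`i` and `L` splits into consecutive blocks of lengths `cs` followed by blocks of lengths
`ds`, where within each of the first blocks the second entries are strictly increasing and
within each of the last blocks they are weakly increasing. -/
def IsMultimonotonic (n : ℕ) (cs ds : List ℕ) (L : List (Fin n × Fin n)) : Prop :=
  (∀ p ∈ L, p.1 < p.2) ∧
  ∃ B C : List (List (Fin n × Fin n)),
    L = (B ++ C).flatten ∧
    B.map List.length = cs ∧
    C.map List.length = ds ∧
    (∀ β ∈ B, (β.map Prod.snd).Chain' (· < ·)) ∧
    (∀ β ∈ C, (β.map Prod.snd).Chain' (· ≤ ·))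

/-- The product, in `S_n`, of the sequence of transpositions encoded by a list of pairs. -/
def prodT (n : ℕ) (L : List (Fin n × Fin n)) : Equiv.Perm (Fin n) :=
  (L.map fun p => Equiv.swap p.1 p.2).prod

/-!
Expanding `J_{b_1} ⋯ J_{b_k}` gives the sum of the products `(a_1 b_1) ⋯ (a_k b_k)` over all
`a_i < b_i`. `evalJM` multiplies the factors of a monomial in increasing order of the variables,
so a square-free monomial of degree `c` evaluates to such a sum with `b_1 < ⋯ < b_c` fixed, and
an arbitrary monomial of degree `d` to one with `b_1 ≤ ⋯ ≤ b_d` fixed; as every increasing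
sequence comes from exactly one monomial, `e_c(J)` and `h_d(J)` are the sums over all strictly,
resp. weakly, monotone blocks. No commutation of the `J_b` is needed: a product of such sums is
the sum over the concatenated words, i.e. over the multimonotonic sequences.
-/

section Blockwise

variable {α : Type*}

def IsBlockwise (p : List α → Prop) (cs : List ℕ) (L : List α) : Prop :=
  ∃ B : List (List α), L = B.flatten ∧ B.map List.length = cs ∧ ∀ β ∈ B, p β

variable {p : List α → Prop}

theorem isBlockwise_cons_append {c : ℕ} {cs : List ℕ} {L₁ L₂ : List α} (h : L₁.length = c) :
    IsBlockwise p (c :: cs) (L₁ ++ L₂) ↔ p L₁ ∧ IsBlockwise p cs L₂ := by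
  constructor
  · rintro ⟨_ | ⟨β, B⟩, hL, hB, hp⟩
    · simp at hB
    · simp only [List.map_cons, List.cons.injEq, List.flatten_cons] at hL hB
      obtain ⟨rfl, rfl⟩ := List.append_inj hL (h.trans hB.1.symm)
      exact ⟨hp _ List.mem_cons_self, B, rfl, hB.2, fun β hβ => hp β (List.mem_cons_of_mem _ hβ)⟩
  · rintro ⟨h₁, B, rfl, rfl, hp⟩
    exact ⟨L₁ :: B, rfl, by simp [h], by simpa [h₁] using hp⟩

theorem IsBlockwise.length_eq {cs : List ℕ} {L : List α} (h : IsBlockwise p cs L) :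
    L.length = cs.sum := by
  obtain ⟨B, rfl, rfl, -⟩ := h
  simp [List.length_flatten]

theorem isBlockwise_and_forall_mem {q : α → Prop} {cs : List ℕ} {L : List α} :
    ((∀ x ∈ L, q x) ∧ IsBlockwise p cs L) ↔ IsBlockwise (fun β => (∀ x ∈ β, q x) ∧ p β) cs L := by
  constructor
  · rintro ⟨hq, B, rfl, hB, hp⟩
    exact ⟨B, rfl, hB, fun β hβ => ⟨fun x hx => hq x (List.mem_flatten_of_mem hβ hx), hp β hβ⟩⟩
  · rintro ⟨B, rfl, hB, hp⟩
    refine ⟨fun x hx => ?_, B, rfl, hB, fun β hβ => (hp β hβ).2⟩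
    obtain ⟨β, hβ, hx⟩ := List.mem_flatten.1 hx
    exact (hp β hβ).1 x hx

end Blockwise

def IsMonotoneBlock {α : Type*} [LT α] (r : α → α → Prop) (β : List (α × α)) : Prop :=
  (∀ x ∈ β, x.1 < x.2) ∧ (β.map Prod.snd).IsChain r

theorem isMultimonotonic_append_iff {n : ℕ} {cs ds : List ℕ} {L₁ L₂ : List (Fin n × Fin n)}
    (h : L₁.length = cs.sum) :
    IsMultimonotonic n cs ds (L₁ ++ L₂) ↔
      IsBlockwise (IsMonotoneBlock (· < ·)) cs L₁ ∧
        IsBlockwise (IsMonotoneBlock (· ≤ ·)) ds L₂ := by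
  constructor
  · rintro ⟨hlt, B, C, hL, rfl, rfl, hB, hC⟩
    rw [List.flatten_append] at hL
    obtain ⟨rfl, rfl⟩ := List.append_inj hL (h.trans (IsBlockwise.length_eq ⟨B, rfl, rfl, hB⟩).symm)
    rw [List.forall_mem_append] at hlt
    exact ⟨isBlockwise_and_forall_mem.1 ⟨hlt.1, B, rfl, rfl, hB⟩,
      isBlockwise_and_forall_mem.1 ⟨hlt.2, C, rfl, rfl, hC⟩⟩
  · rintro ⟨hL₁, hL₂⟩
    obtain ⟨hlt₁, B, rfl, rfl, hB⟩ := isBlockwise_and_forall_mem.2 hL₁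
    obtain ⟨hlt₂, C, rfl, rfl, hC⟩ := isBlockwise_and_forall_mem.2 hL₂
    exact ⟨List.forall_mem_append.2 ⟨hlt₁, hlt₂⟩, B, C, by rw [List.flatten_append], rfl, rfl,
      hB, hC⟩

section WordSum

variable {X G : Type*} [Fintype X] [Monoid G] (R : Type*) [Semiring R] (w : X → G)

noncomputable def wordSum (k : ℕ) (P : List X → Prop) : MonoidAlgebra R G :=
  ∑ f ∈ Finset.univ.filter (fun f : Fin k → X => P (List.ofFn f)),
    MonoidAlgebra.single ((List.ofFn f).map w).prod 1

variable {R w}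

theorem wordSum_zero {P : List X → Prop} (h : P []) : wordSum R w 0 P = 1 := by
  simp [wordSum, h, MonoidAlgebra.one_def]

theorem wordSum_congr {k : ℕ} {P Q : List X → Prop}
    (h : ∀ L : List X, L.length = k → (P L ↔ Q L)) : wordSum R w k P = wordSum R w k Q :=
  Finset.sum_congr (Finset.filter_congr fun _ _ => h _ (List.length_ofFn)) fun _ _ => rfl

theorem wordSum_mul_wordSum {k₁ k₂ : ℕ} {P₁ P₂ P : List X → Prop}
    (h : ∀ L₁ L₂ : List X, L₁.length = k₁ → L₂.length = k₂ → (P (L₁ ++ L₂) ↔ P₁ L₁ ∧ P₂ L₂)) :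
    wordSum R w k₁ P₁ * wordSum R w k₂ P₂ = wordSum R w (k₁ + k₂) P := by
  simp only [wordSum, Finset.sum_filter, Finset.sum_mul_sum, ite_zero_mul_ite_zero,
    MonoidAlgebra.single_mul_single, mul_one, ← Finset.sum_product', Finset.univ_product_univ]
  refine Fintype.sum_equiv (Fin.appendEquiv k₁ k₂) _ _ fun ⟨f₁, f₂⟩ => ?_
  rw [show Fin.appendEquiv k₁ k₂ (f₁, f₂) = Fin.append f₁ f₂ from rfl, List.ofFn_fin_append,
    h _ _ List.length_ofFn List.length_ofFn, List.map_append, List.prod_append]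
  congr 1

theorem sum_wordSum_fiberwise {ι : Type*} [DecidableEq ι] (S : Finset ι) (g : List X → ι)
    {k : ℕ} (P : List X → Prop) :
    ∑ i ∈ S, wordSum R w k (fun L => P L ∧ g L = i) = wordSum R w k (fun L => P L ∧ g L ∈ S) := by
  simp only [wordSum]
  rw [← Finset.sum_fiberwise_of_maps_to
    (s := Finset.univ.filter fun f : Fin k → X => P (List.ofFn f) ∧ g (List.ofFn f) ∈ S)
    (g := fun f => g (List.ofFn f)) (fun f hf => (Finset.mem_filter.1 hf).2.2)]
  refine Finset.sum_congr rfl fun i hi => Finset.sum_congr ?_ fun _ _ => rfl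
  ext f
  simp only [Finset.mem_filter, Finset.mem_univ, true_and]
  constructor
  · rintro ⟨hP, rfl⟩; exact ⟨⟨hP, hi⟩, rfl⟩
  · rintro ⟨⟨hP, -⟩, rfl⟩; exact ⟨hP, rfl⟩

theorem list_prod_map_wordSum (p : List X → Prop) (cs : List ℕ) :
    (cs.map fun c => wordSum R w c p).prod = wordSum R w cs.sum (IsBlockwise p cs) := by
  induction cs with
  | nil => exact (wordSum_zero ⟨[], rfl, rfl, by simp⟩).symm
  | cons c cs ih =>
    rw [List.map_cons, List.prod_cons, ih, List.sum_cons]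
    exact wordSum_mul_wordSum fun L₁ L₂ h₁ _ => isBlockwise_cons_append h₁

end WordSum

theorem List.prod_map_eq_prod_finRange_pow_count {M : Type*} [Monoid M] {n : ℕ} (f : Fin n → M)
    {l : List (Fin n)} (hl : l.Pairwise (· ≤ ·)) :
    (l.map f).prod = ((List.finRange n).map fun i => f i ^ l.count i).prod := by
  have hl' : ((List.finRange n).flatMap fun i => List.replicate (l.count i) i) = l := by
    refine List.Perm.eq_of_pairwise' ?_ hl (List.perm_iff_count.2 fun j => ?_)
    · refine List.pairwise_flatMap.2 ⟨fun i _ => List.pairwise_replicate.2 (Or.inr le_rfl), ?_⟩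
      refine (List.pairwise_lt_finRange n).imp fun hij x hx y hy => ?_
      rw [List.eq_of_mem_replicate hx, List.eq_of_mem_replicate hy]
      exact hij.le
    · simp [List.count_flatMap, List.count_replicate, ← Fin.sum_univ_def]
  conv_lhs => rw [← hl']
  simp [List.flatMap, List.prod_flatten, Function.comp_def, List.prod_replicate]

theorem Multiset.eq_sort_iff {α : Type*} (r : α → α → Prop) [DecidableRel r] [IsTrans α r]
    [Std.Antisymm r] [Std.Total r] {l : List α} {μ : Multiset α} :
    l = μ.sort r ↔ l.Pairwise r ∧ (l : Multiset α) = μ := by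
  constructor
  · rintro rfl
    exact ⟨pairwise_sort _ _, sort_eq _ _⟩
  · rintro ⟨hl, rfl⟩
    rw [coe_sort, List.mergeSort_eq_self r hl]

theorem MvPolynomial.prod_map_X_eq_monomial {σ R : Type*} [CommSemiring R] [DecidableEq σ]
    (μ : Multiset σ) : (μ.map X).prod = monomial (Multiset.toFinsupp μ) (1 : R) := by
  induction μ using Multiset.induction_on with
  | empty => simp
  | cons a μ ih =>
    rw [Multiset.map_cons, Multiset.prod_cons, ih, X, monomial_mul, one_mul,
      ← Multiset.singleton_add, Multiset.toFinsupp_add, Multiset.toFinsupp_singleton]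

section JucysMurphy

variable {n : ℕ}

theorem JM_eq_wordSum (b : Fin n) :
    JM n b = wordSum ℂ (Function.uncurry Equiv.swap) 1
      (fun L => (∀ x ∈ L, x.1 < x.2) ∧ L.map Prod.snd = [b]) := by
  refine Finset.sum_nbij' (fun a _ => (a, b)) (fun f => (f 0).1) (fun a ha => by simpa using ha)
    ?_ (fun _ _ => rfl) ?_ fun _ _ => rfl
  · intro f hf
    obtain ⟨hlt, rfl⟩ : (f 0).1 < (f 0).2 ∧ (f 0).2 = b := by simpa using hf
    simpa using hlt
  · intro f hf
    obtain ⟨-, rfl⟩ : (f 0).1 < (f 0).2 ∧ (f 0).2 = b := by simpa using hf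
    funext i
    rw [Subsingleton.elim i 0]

theorem prod_map_JM_eq_wordSum (bs : List (Fin n)) :
    (bs.map (JM n)).prod = wordSum ℂ (Function.uncurry Equiv.swap) bs.length
      (fun L => (∀ x ∈ L, x.1 < x.2) ∧ L.map Prod.snd = bs) := by
  induction bs with
  | nil => exact (wordSum_zero (by simp)).symm
  | cons b bs ih =>
    rw [List.map_cons, List.prod_cons, ih, JM_eq_wordSum, List.length_cons, Nat.add_comm]
    refine wordSum_mul_wordSum fun L₁ L₂ h₁ _ => ?_
    obtain ⟨x, rfl⟩ := List.length_eq_one_iff.1 h₁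
    simp [and_assoc, and_left_comm]

theorem evalJM_sum {ι : Type*} (s : Finset ι) (G : ι → MvPolynomial (Fin n) ℂ) :
    evalJM n (∑ i ∈ s, G i) = ∑ i ∈ s, evalJM n (G i) :=
  show Finsupp.linearCombination ℂ _ (AddMonoidAlgebra.coeff _) = _ by
    rw [AddMonoidAlgebra.coeff_sum, map_sum]; rfl

theorem evalJM_monomial_one (m : Fin n →₀ ℕ) :
    evalJM n (MvPolynomial.monomial m 1) = ((List.finRange n).map fun i => JM n i ^ m i).prod := by
  simp [evalJM, MvPolynomial.support_monomial]

theorem evalJM_prod_map_X (μ : Multiset (Fin n)) :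
    evalJM n (μ.map MvPolynomial.X).prod = ((μ.sort (· ≤ ·)).map (JM n)).prod := by
  rw [MvPolynomial.prod_map_X_eq_monomial, evalJM_monomial_one,
    List.prod_map_eq_prod_finRange_pow_count _ (Multiset.pairwise_sort _ _)]
  simp [Multiset.toFinsupp_apply, ← Multiset.coe_count]

theorem sum_evalJM_prod_map_X {k : ℕ} (S : Finset (Multiset (Fin n)))
    (hS : ∀ μ ∈ S, Multiset.card μ = k) :
    ∑ μ ∈ S, evalJM n (μ.map MvPolynomial.X).prod =
      wordSum ℂ (Function.uncurry Equiv.swap) k (fun L =>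
        ((∀ x ∈ L, x.1 < x.2) ∧ (L.map Prod.snd).Pairwise (· ≤ ·)) ∧ ↑(L.map Prod.snd) ∈ S) := by
  rw [← sum_wordSum_fiberwise]
  refine Finset.sum_congr rfl fun μ hμ => ?_
  rw [evalJM_prod_map_X, prod_map_JM_eq_wordSum, Multiset.length_sort, hS μ hμ]
  exact wordSum_congr fun L _ => by rw [and_assoc, Multiset.eq_sort_iff]

theorem evalJM_esymm (c : ℕ) :
    evalJM n (MvPolynomial.esymm (Fin n) ℂ c) =
      wordSum ℂ (Function.uncurry Equiv.swap) c (IsMonotoneBlock (· < ·)) := by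
  let val : Finset (Fin n) ↪ Multiset (Fin n) := ⟨Finset.val, Finset.val_injective⟩
  have hS : ∀ μ ∈ (Finset.univ.powersetCard c).map val, Multiset.card μ = c := by
    simp [val]
  calc _ = ∑ μ ∈ (Finset.univ.powersetCard c).map val, evalJM n (μ.map MvPolynomial.X).prod := by
        simp only [MvPolynomial.esymm, evalJM_sum, Finset.prod_eq_multiset_prod, Finset.sum_map]
        rfl
    _ = _ := sum_evalJM_prod_map_X _ hS
    _ = _ := wordSum_congr fun L hL => by
        have hmem : ↑(L.map Prod.snd) ∈ (Finset.univ.powersetCard c).map val ↔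
            (L.map Prod.snd).Nodup := by
          constructor
          · rintro hμ
            obtain ⟨t, -, ht⟩ := Finset.mem_map.1 hμ
            exact Multiset.coe_nodup.1 (ht ▸ t.nodup)
          · intro hnd
            exact Finset.mem_map.2 ⟨⟨_, Multiset.coe_nodup.2 hnd⟩,
              Finset.mem_powersetCard.2 ⟨Finset.subset_univ _, by simp [hL]⟩, rfl⟩
        rw [hmem, IsMonotoneBlock, List.isChain_iff_pairwise, and_assoc]
        simp only [lt_iff_le_and_ne, List.pairwise_and_iff, List.Nodup]

theorem evalJM_hsymm (d : ℕ) :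
    evalJM n (MvPolynomial.hsymm (Fin n) ℂ d) =
      wordSum ℂ (Function.uncurry Equiv.swap) d (IsMonotoneBlock (· ≤ ·)) := by
  let val : Sym (Fin n) d ↪ Multiset (Fin n) := Function.Embedding.subtype _
  have hS : ∀ μ ∈ Finset.univ.map val, Multiset.card μ = d := by
    rintro _ hμ
    obtain ⟨s, -, rfl⟩ := Finset.mem_map.1 hμ
    exact s.2
  calc _ = ∑ μ ∈ Finset.univ.map val, evalJM n (μ.map MvPolynomial.X).prod := by
        simp only [MvPolynomial.hsymm, evalJM_sum, Finset.sum_map]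
        rfl
    _ = _ := sum_evalJM_prod_map_X _ hS
    _ = _ := wordSum_congr fun L hL => by
        have hmem : ↑(L.map Prod.snd) ∈ Finset.univ.map val :=
          Finset.mem_map.2 ⟨⟨_, by simp [hL]⟩, Finset.mem_univ _, rfl⟩
        simp only [hmem, and_true, IsMonotoneBlock, List.isChain_iff_pairwise]

end JucysMurphy

theorem prod_esymm_hsymm_JM_eq_sum_multimonotonic_general (n : ℕ) (cs ds : List ℕ) :
    (cs.map fun c => evalJM n (MvPolynomial.esymm (Fin n) ℂ c)).prod *
      (ds.map fun d => evalJM n (MvPolynomial.hsymm (Fin n) ℂ d)).prod =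
      ∑ f ∈ Finset.univ.filter
          (fun f : Fin (cs.sum + ds.sum) → Fin n × Fin n =>
            IsMultimonotonic n cs ds (List.ofFn f)),
        MonoidAlgebra.single (prodT n (List.ofFn f)) 1 := by
  simp only [evalJM_esymm, evalJM_hsymm, list_prod_map_wordSum]
  exact wordSum_mul_wordSum fun L₁ L₂ h₁ _ => isMultimonotonic_append_iff h₁

/-- The product `e_{c_1}(J) ⋯ e_{c_l}(J) · h_{d_1}(J) ⋯ h_{d_m}(J)` of elementary and complete
homogeneous symmetric polynomials evaluated at the Jucys–Murphy elements equals the sum, in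
`ℂ[S_n]`, of the products `(a_1 b_1) ⋯ (a_k b_k)` over all multimonotonic sequences of
transpositions of type `((c_1,…,c_l), (d_1,…,d_m))`, where `k = ∑ c_a + ∑ d_b`. -/
theorem prod_esymm_hsymm_JM_eq_sum_multimonotonic (n : ℕ) (hn : 1 ≤ n) (cs ds : List ℕ) :
    (cs.map fun c => evalJM n (MvPolynomial.esymm (Fin n) ℂ c)).prod *
      (ds.map fun d => evalJM n (MvPolynomial.hsymm (Fin n) ℂ d)).prod =
      ∑ f ∈ Finset.univ.filter
          (fun f : Fin (cs.sum + ds.sum) → Fin n × Fin n =>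
            IsMultimonotonic n cs ds (List.ofFn f)),
        MonoidAlgebra.single (prodT n (List.ofFn f)) 1 :=
  prod_esymm_hsymm_JM_eq_sum_multimonotonic_general n cs ds
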